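/- arXiv:2603.07913 — 8 statements merged into one kernel-verified Lean document; each statement's English description precedes it below -/
import Mathlib

section
/- Let H be a complex Hilbert space and let C, D, M : H → H be bounded self-adjoint operators with D invertible (with continuous inverse), and suppose the kernel of C is the one-dimensional span of a nonzero vector φ' ∈ H. Then the Hilbert-space adjoint L† of the block operator L(p, q) = (D q, −C p − M q) on H × H is given by L†(p, q) = (−C q, D p − M q), and the kernel of L† is exactly {(c • D⁻¹ M φ', c • φ') : c ∈ ℂ}. -/
open scoped InnerProductSpace

section Adjoint

variable {𝕜 E : Type*} [RCLike 𝕜] [NormedAddCommGroup E] [InnerProductSpace 𝕜 E]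

theorem inner_blockOperator_eq_inner_blockAdjoint {C D M : E →ₗ[𝕜] E}
    (hC : C.IsSymmetric) (hD : D.IsSymmetric) (hM : M.IsSymmetric) (p q p' q' : E) :
    ⟪D q, p'⟫_𝕜 + ⟪-C p - M q, q'⟫_𝕜 = ⟪p, -C q'⟫_𝕜 + ⟪q, D p' - M q'⟫_𝕜 := by
  simp only [inner_sub_left, inner_sub_right, inner_neg_left, inner_neg_right,
    hC p q', hD q p', hM q q']
  ring

end Adjoint

section Kernel

variable {R E : Type*} [Ring R] [AddCommGroup E] [TopologicalSpace E] [Module R E]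

theorem blockAdjoint_eq_zero_iff {C D M Dinv : E →L[R] E}
    (hD1 : D.comp Dinv = ContinuousLinearMap.id R E)
    (hD2 : Dinv.comp D = ContinuousLinearMap.id R E) {p q : E} :
    (-C q, D p - M q) = (0, 0) ↔ C q = 0 ∧ p = Dinv (M q) := by
  have hDinv : D p = M q ↔ p = Dinv (M q) :=
    ⟨fun h => by rw [← h, ← Dinv.comp_apply D, hD2, ContinuousLinearMap.id_apply],
      fun h => by rw [h, ← D.comp_apply Dinv, hD1, ContinuousLinearMap.id_apply]⟩
  rw [Prod.mk.injEq, neg_eq_zero, sub_eq_zero, hDinv]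

theorem setOf_blockAdjoint_eq_zero {C D M Dinv : E →L[R] E}
    (hD1 : D.comp Dinv = ContinuousLinearMap.id R E)
    (hD2 : Dinv.comp D = ContinuousLinearMap.id R E) {φ : E}
    (hker : LinearMap.ker (C : E →ₗ[R] E) = Submodule.span R {φ}) :
    {P : E × E | (-C P.2, D P.1 - M P.2) = (0, 0)} =
      {P : E × E | ∃ c : R, P = (c • Dinv (M φ), c • φ)} := by
  ext ⟨p, q⟩
  have hq : C q = 0 ↔ ∃ c : R, c • φ = q := by
    rw [← Submodule.mem_span_singleton, ← hker, LinearMap.mem_ker,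
      ContinuousLinearMap.coe_coe]
  simp only [Set.mem_ofPred_eq, blockAdjoint_eq_zero_iff hD1 hD2, hq, Prod.mk.injEq]
  constructor
  · rintro ⟨⟨c, rfl⟩, rfl⟩
    exact ⟨c, by rw [map_smul, map_smul], rfl⟩
  · rintro ⟨c, rfl, rfl⟩
    exact ⟨⟨c, rfl⟩, by rw [map_smul, map_smul]⟩

end Kernel

theorem adjoint_of_block_operator_general
    {H : Type*} [NormedAddCommGroup H] [InnerProductSpace ℂ H] [CompleteSpace H]
    (C D M Dinv : H →L[ℂ] H)
    (hC : IsSelfAdjoint C) (hD : IsSelfAdjoint D) (hM : IsSelfAdjoint M)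
    (hD1 : D.comp Dinv = ContinuousLinearMap.id ℂ H)
    (hD2 : Dinv.comp D = ContinuousLinearMap.id ℂ H)
    (φ' : H)
    (hker : LinearMap.ker (C : H →ₗ[ℂ] H) = Submodule.span ℂ {φ'}) :
    (∀ p q p' q' : H,
      ⟪D q, p'⟫_ℂ + ⟪-C p - M q, q'⟫_ℂ = ⟪p, -C q'⟫_ℂ + ⟪q, D p' - M q'⟫_ℂ) ∧
    {P : H × H | (-C P.2, D P.1 - M P.2) = (0, 0)} =
      {P : H × H | ∃ c : ℂ, P = (c • Dinv (M φ'), c • φ')} :=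
  ⟨inner_blockOperator_eq_inner_blockAdjoint hC.isSymmetric hD.isSymmetric hM.isSymmetric,
    setOf_blockAdjoint_eq_zero hD1 hD2 hker⟩

/-- Lemma 2.1 (adjoint kernel): for bounded self-adjoint `C, D, M` with `D` invertible
(with continuous inverse `Dinv`) and `ker C = span {φ'}`, `φ' ≠ 0`, the Hilbert-space
adjoint of the block operator `L(p, q) = (D q, -C p - M q)` is
`L†(p, q) = (-C q, D p - M q)` (characterized by the inner-product identity on the
product Hilbert space, whose inner product is the sum of componentwise inner products),
and the kernel of `L†` is exactly `{(c • D⁻¹ M φ', c • φ') : c ∈ ℂ}`. -/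
theorem adjoint_of_block_operator
    {H : Type*} [NormedAddCommGroup H] [InnerProductSpace ℂ H] [CompleteSpace H]
    (C D M Dinv : H →L[ℂ] H)
    (hC : IsSelfAdjoint C) (hD : IsSelfAdjoint D) (hM : IsSelfAdjoint M)
    (hD1 : D.comp Dinv = ContinuousLinearMap.id ℂ H)
    (hD2 : Dinv.comp D = ContinuousLinearMap.id ℂ H)
    (φ' : H) (hφ' : φ' ≠ 0)
    (hker : LinearMap.ker (C : H →ₗ[ℂ] H) = Submodule.span ℂ {φ'}) :
    (∀ p q p' q' : H,
      ⟪D q, p'⟫_ℂ + ⟪-C p - M q, q'⟫_ℂ = ⟪p, -C q'⟫_ℂ + ⟪q, D p' - M q'⟫_ℂ) ∧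
    {P : H × H | (-C P.2, D P.1 - M P.2) = (0, 0)} =
      {P : H × H | ∃ c : ℂ, P = (c • Dinv (M φ'), c • φ')} :=
  adjoint_of_block_operator_general C D M Dinv hC hD hM hD1 hD2 φ' hker
end

section
/- Let H be a complex Hilbert space and let C, D, M : H → H be bounded self-adjoint operators with D invertible, Cφ' = 0 for a nonzero vector φ' ∈ H, and suppose ⟪φ', D⁻¹ M φ'⟫ ≠ 0. Then there is no pair (p, q) ∈ H × H with L(p, q) = (φ', 0), where L is the block operator L(p, q) = (D q, −C p − M q). In other words, the kernel vector (φ', 0) of L admits no generalized eigenvector, so the zero eigenvalue of L is simple. -/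
open scoped InnerProductSpace

/-- Lemma 2.1 (simplicity of the kernel): for bounded self-adjoint `C, D, M` with `D`
invertible, `C φ' = 0`, `φ' ≠ 0`, and `⟪φ', D⁻¹ M φ'⟫ ≠ 0` (inner product linear in its
first argument, i.e. `⟪D⁻¹ M φ', φ'⟫_ℂ ≠ 0` in Mathlib's convention), there is no pair
`(p, q)` with `L(p, q) = (φ', 0)` for the block operator `L(p, q) = (D q, -C p - M q)`:
the kernel vector `(φ', 0)` admits no generalized eigenvector. -/
theorem no_generalized_eigenvector
    {H : Type*} [NormedAddCommGroup H] [InnerProductSpace ℂ H] [CompleteSpace H]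
    (C D M Dinv : H →L[ℂ] H)
    (hC : IsSelfAdjoint C) (hD : IsSelfAdjoint D) (hM : IsSelfAdjoint M)
    (hD1 : D.comp Dinv = ContinuousLinearMap.id ℂ H)
    (hD2 : Dinv.comp D = ContinuousLinearMap.id ℂ H)
    (φ' : H) (hφ' : φ' ≠ 0) (hCφ : C φ' = 0)
    (hne : ⟪Dinv (M φ'), φ'⟫_ℂ ≠ 0) :
    ¬ ∃ p q : H, (D q, -C p - M q) = (φ', (0 : H)) := by
  rintro ⟨p, q, h⟩
  rw [Prod.mk.injEq] at h
  obtain ⟨h1, h2⟩ := h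
  have hq : q = Dinv φ' := by
    have := congrArg Dinv h1
    simpa using (congrFun (congrArg DFunLike.coe hD2) q).symm.trans this
  -- Dinv is symmetric
  have hDinv : ∀ x y : H, ⟪Dinv x, y⟫_ℂ = ⟪x, Dinv y⟫_ℂ := by
    intro x y
    have e1 : D (Dinv y) = y := congrFun (congrArg DFunLike.coe hD1) y
    have e2 : D (Dinv x) = x := congrFun (congrArg DFunLike.coe hD1) x
    calc ⟪Dinv x, y⟫_ℂ = ⟪Dinv x, D (Dinv y)⟫_ℂ := by rw [e1]
      _ = ⟪D (Dinv x), Dinv y⟫_ℂ := (hD.isSymmetric _ _).symm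
      _ = ⟪x, Dinv y⟫_ℂ := by rw [e2]
  -- M q = -C p from h2
  have hMq : M q = -C p := by
    have h3 : -C p - M q = 0 := h2
    rw [sub_eq_zero] at h3
    exact h3.symm
  have hCsym := hC.isSymmetric p φ'
  simp only [ContinuousLinearMap.coe_coe] at hCsym
  have key : ⟪M q, φ'⟫_ℂ = 0 := by
    rw [hMq, inner_neg_left, hCsym, hCφ, inner_zero_right, neg_zero]
  rw [hq] at key
  apply hne
  have hMsym := hM.isSymmetric φ' (Dinv φ')
  simp only [ContinuousLinearMap.coe_coe] at hMsym
  rw [hDinv, hMsym, ← inner_conj_symm, key, map_zero]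
end

section
/- Let H be a complex Hilbert space and let C, D, M : H → H be bounded self-adjoint operators with D invertible and Cφ' = 0 for a vector φ' ∈ H. Suppose λ ∈ ℂ with λ ≠ 0 and (P₁, P₂) ∈ H × H is a nonzero eigenvector of the block operator L(p, q) = (D q, −C p − M q) with eigenvalue λ. Then P₂ = λ • D⁻¹ P₁, the component P₁ is nonzero, and P₁ satisfies the constraint ⟪P₁, D⁻¹ M φ'⟫ + λ ⟪P₁, D⁻¹ φ'⟫ = 0. In particular, when λ is real, P₁ is orthogonal to the constraint vector s_λ = D⁻¹ (M + λ I) φ'. -/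
open scoped InnerProductSpace

/-- Lemma 2.3 (point-spectrum constraint): for bounded self-adjoint `C, D, M` with `D`
invertible and `C φ' = 0`, if `(P₁, P₂) ≠ 0` is an eigenvector of the block operator
`L(p, q) = (D q, -C p - M q)` with eigenvalue `lam ≠ 0`, then `P₂ = lam • D⁻¹ P₁`,
`P₁ ≠ 0`, and `P₁` satisfies the constraint `⟪P₁, D⁻¹ M φ'⟫ + lam ⟪P₁, D⁻¹ φ'⟫ = 0`
(paper convention: inner product linear in the first argument, so it is rendered
with Mathlib's inner product as `⟪D⁻¹ M φ', P₁⟫_ℂ + lam * ⟪D⁻¹ φ', P₁⟫_ℂ = 0`).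
In particular, when `lam` is real, `P₁ ⊥ s_lam = D⁻¹ (M + lam I) φ'`. -/
theorem eigenvector_constraint
    {H : Type*} [NormedAddCommGroup H] [InnerProductSpace ℂ H] [CompleteSpace H]
    (C D M Dinv : H →L[ℂ] H)
    (hC : IsSelfAdjoint C) (hD : IsSelfAdjoint D) (hM : IsSelfAdjoint M)
    (hD1 : D.comp Dinv = ContinuousLinearMap.id ℂ H)
    (hD2 : Dinv.comp D = ContinuousLinearMap.id ℂ H)
    (φ' : H) (hCφ : C φ' = 0)
    (lam : ℂ) (hlam : lam ≠ 0)
    (P₁ P₂ : H) (hP : (P₁, P₂) ≠ (0, 0))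
    (h1 : D P₂ = lam • P₁) (h2 : -C P₁ - M P₂ = lam • P₂) :
    P₂ = lam • Dinv P₁ ∧ P₁ ≠ 0 ∧
      ⟪Dinv (M φ'), P₁⟫_ℂ + lam * ⟪Dinv φ', P₁⟫_ℂ = 0 ∧
      (lam.im = 0 → ⟪Dinv (M φ' + lam • φ'), P₁⟫_ℂ = 0) := by
  have hDsym : ∀ x y : H, ⟪D x, y⟫_ℂ = ⟪x, D y⟫_ℂ := fun x y =>
    hD.isSymmetric x y
  have hMsym : ∀ x y : H, ⟪M x, y⟫_ℂ = ⟪x, M y⟫_ℂ := fun x y =>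
    hM.isSymmetric x y
  have hCsym : ∀ x y : H, ⟪C x, y⟫_ℂ = ⟪x, C y⟫_ℂ := fun x y =>
    hC.isSymmetric x y
  have hDinvD : ∀ x : H, Dinv (D x) = x := fun x =>
    congrFun (congrArg DFunLike.coe hD2) x
  have hDDinv : ∀ x : H, D (Dinv x) = x := fun x =>
    congrFun (congrArg DFunLike.coe hD1) x
  have hDinvsym : ∀ x y : H, ⟪Dinv x, y⟫_ℂ = ⟪x, Dinv y⟫_ℂ := by
    intro x y
    calc ⟪Dinv x, y⟫_ℂ = ⟪Dinv x, D (Dinv y)⟫_ℂ := by rw [hDDinv]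
    _ = ⟪D (Dinv x), Dinv y⟫_ℂ := (hDsym _ _).symm
    _ = ⟪x, Dinv y⟫_ℂ := by rw [hDDinv]
  -- P₂ = lam • Dinv P₁
  have e1 : P₂ = lam • Dinv P₁ := by
    have := congrArg Dinv h1
    rw [hDinvD, map_smul] at this
    exact this
  -- P₁ ≠ 0
  have e2 : P₁ ≠ 0 := by
    intro h0
    apply hP
    have : P₂ = 0 := by rw [e1, h0, map_zero, smul_zero]
    simp [h0, this]
  -- from h2 : M P₂ + lam • P₂ = - C P₁
  have h2' : M P₂ + lam • P₂ = -C P₁ := by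
    have := h2
    linear_combination (norm := abel) -this
  have key : lam * (⟪Dinv (M φ'), P₁⟫_ℂ + lam * ⟪Dinv φ', P₁⟫_ℂ) = 0 := by
    have c1 : ⟪Dinv (M φ'), P₁⟫_ℂ = ⟪φ', M (Dinv P₁)⟫_ℂ := by
      rw [hDinvsym, hMsym]
    have c2 : ⟪Dinv φ', P₁⟫_ℂ = ⟪φ', Dinv P₁⟫_ℂ := hDinvsym _ _
    rw [c1, c2]
    have : lam • (M (Dinv P₁)) + (lam * lam) • Dinv P₁ = -C P₁ := by
      rw [← map_smul, ← e1, mul_smul, ← e1, h2']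
    calc lam * (⟪φ', M (Dinv P₁)⟫_ℂ + lam * ⟪φ', Dinv P₁⟫_ℂ)
        = ⟪φ', lam • (M (Dinv P₁)) + (lam * lam) • Dinv P₁⟫_ℂ := by
          rw [inner_add_right, inner_smul_right, inner_smul_right]; ring
      _ = ⟪φ', -C P₁⟫_ℂ := by rw [this]
      _ = -⟪C φ', P₁⟫_ℂ := by rw [inner_neg_right, hCsym]
      _ = 0 := by rw [hCφ, inner_zero_left, neg_zero]
  have e3 : ⟪Dinv (M φ'), P₁⟫_ℂ + lam * ⟪Dinv φ', P₁⟫_ℂ = 0 :=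
    (mul_eq_zero.mp key).resolve_left hlam
  refine ⟨e1, e2, e3, fun him => ?_⟩
  have hconj : (starRingEnd ℂ) lam = lam := Complex.conj_eq_iff_im.mpr him
  rw [map_add, map_smul, inner_add_left, inner_smul_left, hconj]
  exact e3
end

section
/- Let H be a complex Hilbert space. Let D : H → H be a bounded self-adjoint invertible operator, ψ ∈ H a unit vector with D ψ = λ_D • ψ for some real λ_D < 0, and ω > 0 such that Re ⟪D v, v⟫ ≥ ω ‖v‖² for every v orthogonal to ψ. Let f : ℝ → ℝ be continuous and monotone nondecreasing. Then for every u ∈ H, Re ⟪(cfc f D)(D⁻¹ u), u⟫ ≥ f(λ_D) · Re ⟪D⁻¹ u, u⟫, where cfc f D denotes the continuous functional calculus of f applied to D. -/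
/-!
For `lamD < ρ < ω` the operator `ρ - D` is bounded below by `min (ρ - lamD) (ω - ρ)`: split
`x` along `ψ` and `ψᗮ`, both invariant under `D`, and use the gap on `ψᗮ`. A self-adjoint
operator that is bounded below is invertible, so `σ(D) ⊆ (-∞, lamD] ∪ [ω, ∞)`. On that set,
which avoids `0`, the function `g ρ = (f ρ - f lamD) / ρ` is nonnegative by monotonicity of `f`,
hence `0 ≤ cfc g D = (cfc f D - f lamD) * D⁻¹`.
-/

open scoped InnerProductSpace
open RCLike

section InnerProductSpace

variable {𝕜 E : Type*} [RCLike 𝕜] [NormedAddCommGroup E] [InnerProductSpace 𝕜 E]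

lemma mul_norm_le_norm_of_mul_norm_sq_le_re_inner {c : ℝ} {v w : E}
    (h : c * ‖v‖ ^ 2 ≤ re ⟪v, w⟫_𝕜) : c * ‖v‖ ≤ ‖w‖ := by
  rcases (norm_nonneg v).eq_or_lt with hv | hv
  · simp [← hv]
  · refine le_of_mul_le_mul_left ?_ hv
    calc ‖v‖ * (c * ‖v‖) = c * ‖v‖ ^ 2 := by ring
      _ ≤ ‖⟪v, w⟫_𝕜‖ := h.trans (re_le_norm _)
      _ ≤ ‖v‖ * ‖w‖ := norm_inner_le_norm v w

lemma norm_smul_add_mul_self_of_inner_eq_zero {ψ w : E} (hψ : ‖ψ‖ = 1) (hw : ⟪ψ, w⟫_𝕜 = 0)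
    (b : 𝕜) : ‖b • ψ + w‖ * ‖b • ψ + w‖ = ‖b‖ * ‖b‖ + ‖w‖ * ‖w‖ := by
  rw [norm_add_sq_eq_norm_sq_add_norm_sq_of_inner_eq_zero _ _
    (by rw [inner_smul_left, hw, mul_zero]), norm_smul, hψ, mul_one]

lemma LinearMap.IsSymmetric.min_mul_norm_le_norm_smul_sub {T : E →ₗ[𝕜] E} (hT : T.IsSymmetric)
    {ψ : E} (hψ : ‖ψ‖ = 1) {μ ω ρ : ℝ} (hTψ : T ψ = (μ : 𝕜) • ψ)
    (hgap : ∀ v, ⟪ψ, v⟫_𝕜 = 0 → ω * ‖v‖ ^ 2 ≤ re ⟪v, T v⟫_𝕜) (hμρ : μ ≤ ρ) (hρω : ρ ≤ ω)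
    (x : E) : min (ρ - μ) (ω - ρ) * ‖x‖ ≤ ‖(ρ : 𝕜) • x - T x‖ := by
  set a := ⟪ψ, x⟫_𝕜
  set v := x - a • ψ
  have hψv : ⟪ψ, v⟫_𝕜 = 0 := by simp [v, a, inner_sub_right, inner_smul_right, hψ]
  have hψTv : ⟪ψ, T v⟫_𝕜 = 0 := by rw [← hT, hTψ, inner_smul_left, hψv, mul_zero]
  have hx : x = a • ψ + v := by simp [v]
  clear_value a v
  have hTx : (ρ : 𝕜) • x - T x = (a * (ρ - μ)) • ψ + ((ρ : 𝕜) • v - T v) := by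
    rw [hx, map_add, map_smul, hTψ]
    module
  have hTv : (ω - ρ) * ‖v‖ ≤ ‖(ρ : 𝕜) • v - T v‖ := by
    rw [norm_sub_rev ((ρ : 𝕜) • v)]
    refine mul_norm_le_norm_of_mul_norm_sq_le_re_inner (𝕜 := 𝕜) ?_
    rw [inner_sub_right, inner_smul_right, map_sub, inner_self_eq_norm_sq_to_K, re_ofReal_mul,
      ← ofReal_pow, ofReal_re]
    linarith [hgap v hψv]
  have hψSv : ⟪ψ, (ρ : 𝕜) • v - T v⟫_𝕜 = 0 := by
    rw [inner_sub_right, inner_smul_right, hψv, hψTv, mul_zero, sub_zero]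
  set c := min (ρ - μ) (ω - ρ)
  have hc : 0 ≤ c := le_min (sub_nonneg.2 hμρ) (sub_nonneg.2 hρω)
  have ha : c * ‖a‖ ≤ ‖a * (ρ - μ)‖ := by
    rw [norm_mul, ← ofReal_sub, norm_ofReal, abs_of_nonneg (sub_nonneg.2 hμρ), mul_comm]
    gcongr
    exact min_le_left _ _
  have hv' : c * ‖v‖ ≤ ‖(ρ : 𝕜) • v - T v‖ :=
    (mul_le_mul_of_nonneg_right (min_le_right _ _) (norm_nonneg _)).trans hTv
  have hx2 := hx ▸ norm_smul_add_mul_self_of_inner_eq_zero hψ hψv a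
  have hTx2 := hTx ▸ norm_smul_add_mul_self_of_inner_eq_zero hψ hψSv (a * (ρ - μ))
  rw [← sq_le_sq₀ (by positivity) (norm_nonneg _)]
  calc (c * ‖x‖) ^ 2 = c * ‖a‖ * (c * ‖a‖) + c * ‖v‖ * (c * ‖v‖) := by
        linear_combination c ^ 2 * hx2
    _ ≤ _ := add_le_add (mul_self_le_mul_self (by positivity) ha)
        (mul_self_le_mul_self (by positivity) hv')
    _ = ‖(ρ : 𝕜) • x - T x‖ ^ 2 := by rw [sq, hTx2]

lemma IsSelfAdjoint.isUnit_of_mul_norm_le [CompleteSpace E] {T : E →L[𝕜] E}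
    (hT : IsSelfAdjoint T) {c : ℝ} (hc : 0 < c) (h : ∀ x, c * ‖x‖ ≤ ‖T x‖) : IsUnit T := by
  obtain ⟨K, hK⟩ := antilipschitzWith_iff_exists_mul_le_norm.mpr ⟨c, hc, h⟩
  rw [ContinuousLinearMap.isUnit_iff_bijective,
    ContinuousLinearMap.bijective_iff_dense_range_and_antilipschitz]
  refine ⟨?_, K, hK⟩
  rw [Submodule.topologicalClosure_eq_top_iff, T.orthogonal_range, hT.adjoint_eq]
  exact LinearMap.ker_eq_bot.mpr hK.injective

end InnerProductSpace

lemma IsSelfAdjoint.spectrum_subset_Iic_union_Ici {E : Type*} [NormedAddCommGroup E]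
    [InnerProductSpace ℂ E] [CompleteSpace E] {D : E →L[ℂ] E} (hD : IsSelfAdjoint D) {ψ : E}
    (hψ : ‖ψ‖ = 1) {μ ω : ℝ} (hDψ : D ψ = (μ : ℂ) • ψ)
    (hgap : ∀ v, ⟪ψ, v⟫_ℂ = 0 → ω * ‖v‖ ^ 2 ≤ (⟪v, D v⟫_ℂ).re) :
    spectrum ℝ D ⊆ Set.Iic μ ∪ Set.Ici ω := by
  intro ρ hρ
  by_contra hρμω
  simp only [Set.mem_union, Set.mem_Iic, Set.mem_Ici, not_or, not_le] at hρμω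
  refine hρ <| IsSelfAdjoint.isUnit_of_mul_norm_le (((IsSelfAdjoint.all ρ).algebraMap _).sub hD)
    (lt_min (sub_pos.2 hρμω.1) (sub_pos.2 hρμω.2)) fun x => ?_
  simpa [Algebra.algebraMap_eq_smul_one, Complex.coe_smul] using
    hD.isSymmetric.min_mul_norm_le_norm_smul_sub hψ hDψ hgap hρμω.1.le hρμω.2.le x

lemma IsSelfAdjoint.isUnit_of_mul_eq_one {A : Type*} [Monoid A] [StarMul A] {a b : A}
    (ha : IsSelfAdjoint a) (hab : a * b = 1) : IsUnit a :=
  isUnit_iff_exists_and_exists.mpr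
    ⟨⟨b, hab⟩, star b, by simpa [ha.star_eq] using congrArg star hab⟩

lemma Monotone.sub_div_nonneg {f : ℝ → ℝ} (hf : Monotone f) {a ρ : ℝ} (h : 0 ≤ ρ * (ρ - a)) :
    0 ≤ (f ρ - f a) / ρ := by
  rcases lt_trichotomy ρ 0 with hρ | rfl | hρ
  · exact div_nonneg_of_nonpos (sub_nonpos.2 (hf (by nlinarith))) hρ.le
  · simp
  · exact div_nonneg (sub_nonneg.2 (hf (by nlinarith))) hρ.le

lemma smul_le_cfc_mul_of_mul_eq_one {A : Type*} [CStarAlgebra A] [PartialOrder A]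
    [StarOrderedRing A] {a b : A} (ha : IsSelfAdjoint a) (hab : a * b = 1) {f : ℝ → ℝ}
    (hf : ContinuousOn f (spectrum ℝ a)) {c : ℝ} (h : ∀ ρ ∈ spectrum ℝ a, 0 ≤ (f ρ - c) / ρ) :
    c • b ≤ cfc f a * b := by
  have hunit := ha.isUnit_of_mul_eq_one hab
  have h0 : ∀ ρ ∈ spectrum ℝ a, ρ ≠ 0 := fun ρ hρ hρ0 =>
    spectrum.zero_notMem ℝ hunit (hρ0 ▸ hρ)
  have key : cfc (fun ρ => (f ρ - c) / ρ) a = cfc f a * b - c • b := by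
    rw [cfc_map_div (fun ρ => f ρ - c) (fun ρ => ρ) a h0, cfc_sub f (fun _ => c) a,
      cfc_const c a, cfc_id' ℝ a, Ring.inverse_of_isUnit hunit,
      Units.inv_eq_of_mul_eq_one_right hab, sub_mul, Algebra.smul_def]
  rw [← sub_nonneg, ← key]
  exact cfc_nonneg h

theorem cfc_Dinv_lower_bound_general
    {H : Type*} [NormedAddCommGroup H] [InnerProductSpace ℂ H] [CompleteSpace H]
    (D Dinv : H →L[ℂ] H) (hD : IsSelfAdjoint D)
    (hD1 : D.comp Dinv = ContinuousLinearMap.id ℂ H)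
    (ψ : H) (hψ : ‖ψ‖ = 1) (lamD : ℝ) (hlamD : lamD < 0) (hDψ : D ψ = lamD • ψ)
    (ω : ℝ) (hω : 0 < ω)
    (hgap : ∀ v : H, ⟪ψ, v⟫_ℂ = 0 → ω * ‖v‖ ^ 2 ≤ (⟪v, D v⟫_ℂ).re)
    (f : ℝ → ℝ) (hf : Continuous f) (hmono : Monotone f) :
    ∀ u : H, f lamD * (⟪u, Dinv u⟫_ℂ).re ≤ (⟪u, (cfc f D) (Dinv u)⟫_ℂ).re := by
  intro u
  have hspec := hD.spectrum_subset_Iic_union_Ici hψ (by rw [hDψ, Complex.coe_smul]) hgap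
  have hle : f lamD • Dinv ≤ cfc f D * Dinv :=
    smul_le_cfc_mul_of_mul_eq_one hD hD1 hf.continuousOn fun ρ hρ => hmono.sub_div_nonneg <| by
      rcases hspec hρ with h | h
      · exact mul_nonneg_of_nonpos_of_nonpos (h.trans hlamD.le) (sub_nonpos.2 h)
      · nlinarith [Set.mem_Ici.1 h]
  have hpos := ((ContinuousLinearMap.le_def _ _).mp hle).re_inner_nonneg_right u
  simpa [inner_sub_right, ← Complex.coe_smul, inner_smul_right] using hpos

/-- The key spectral-representation inequality (e:DinvC_BLF) from Lemma 2.4: if `D` is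
bounded self-adjoint invertible with simple negative ground state `D ψ = lamD • ψ`
(`‖ψ‖ = 1`, `lamD < 0`) and `Re ⟪D v, v⟫ ≥ ω ‖v‖²` on `{ψ}⊥` with `ω > 0`, then for
every continuous monotone nondecreasing `f : ℝ → ℝ` and every `u ∈ H`,
`Re ⟪(cfc f D)(D⁻¹ u), u⟫ ≥ f(lamD) · Re ⟪D⁻¹ u, u⟫`. -/
theorem cfc_Dinv_lower_bound
    {H : Type*} [NormedAddCommGroup H] [InnerProductSpace ℂ H] [CompleteSpace H]
    (D Dinv : H →L[ℂ] H) (hD : IsSelfAdjoint D)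
    (hD1 : D.comp Dinv = ContinuousLinearMap.id ℂ H)
    (hD2 : Dinv.comp D = ContinuousLinearMap.id ℂ H)
    (ψ : H) (hψ : ‖ψ‖ = 1) (lamD : ℝ) (hlamD : lamD < 0) (hDψ : D ψ = lamD • ψ)
    (ω : ℝ) (hω : 0 < ω)
    (hgap : ∀ v : H, ⟪ψ, v⟫_ℂ = 0 → ω * ‖v‖ ^ 2 ≤ (⟪v, D v⟫_ℂ).re)
    (f : ℝ → ℝ) (hf : Continuous f) (hmono : Monotone f) :
    ∀ u : H, f lamD * (⟪u, Dinv u⟫_ℂ).re ≤ (⟪u, (cfc f D) (Dinv u)⟫_ℂ).re :=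
  cfc_Dinv_lower_bound_general D Dinv hD hD1 ψ hψ lamD hlamD hDψ ω hω hgap f hf hmono
end

section
/- Let H be a complex Hilbert space. Let D : H → H be a bounded self-adjoint invertible operator, ψ ∈ H a unit vector with D ψ = λ_D • ψ for some real λ_D < 0, and ω > 0 such that Re ⟪D v, v⟫ ≥ ω ‖v‖² for every v orthogonal to ψ. Let f : ℝ → ℝ be continuous with 0 ≤ f(t) ≤ β₊ for all t ∈ ℝ. Then for every u ∈ H, writing u' := u − ⟪u, ψ⟫ • ψ for the projection of u off the ground state, one has Re ⟪(cfc f D)(D⁻¹ u), u⟫ ≤ β₊ · Re ⟪D⁻¹ u', u'⟫. -/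
/-!
Write `u = ⟪ψ, u⟫ ψ + u'` with `u' ⊥ ψ`. Since `D` is invertible, `D⁻¹ = cfc (·⁻¹) D` and
`f(D) D⁻¹ = cfc (f t / t) D`. Every `cfc g D` is self-adjoint and acts on the eigenvector `ψ` as
`g λ`, so it preserves `ψ⊥`: the cross terms vanish and the ground state contributes
`(f λ / λ) ‖⟪ψ, u⟫‖² ≤ 0`. On `ψ⊥` one has `β D⁻¹ - f(D) D⁻¹ = S D⁻¹ S` with the self-adjoint
`S = cfc √(β - f) D`, and `D⁻¹` is nonnegative on `ψ⊥` by the gap condition applied to `D⁻¹ v ⊥ ψ`.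
-/

open scoped InnerProductSpace

theorem inner_sub_inner_smul_self_eq_zero {𝕜 E : Type*} [RCLike 𝕜] [NormedAddCommGroup E]
    [InnerProductSpace 𝕜 E] {ψ : E} (hψ : ‖ψ‖ = 1) (u : E) : ⟪ψ, u - ⟪ψ, u⟫_𝕜 • ψ⟫_𝕜 = 0 := by
  rw [inner_sub_right, inner_smul_right, inner_self_eq_norm_sq_to_K, hψ]
  simp

theorem re_inner_smul_add_map_smul_add {𝕜 E : Type*} [RCLike 𝕜] [NormedAddCommGroup E]
    [InnerProductSpace 𝕜 E] {T : E →ₗ[𝕜] E} {ψ v : E} {μ : ℝ} (c : 𝕜) (hψ : ‖ψ‖ = 1)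
    (hTψ : T ψ = (μ : 𝕜) • ψ) (hv : ⟪ψ, v⟫_𝕜 = 0) (hTv : ⟪ψ, T v⟫_𝕜 = 0) :
    RCLike.re ⟪c • ψ + v, T (c • ψ + v)⟫_𝕜 = μ * ‖c‖ ^ 2 + RCLike.re ⟪v, T v⟫_𝕜 := by
  have hvψ : ⟪v, ψ⟫_𝕜 = 0 := by rw [← inner_conj_symm, hv, map_zero]
  have hψψ : ⟪ψ, ψ⟫_𝕜 = 1 := by simp [inner_self_eq_norm_sq_to_K, hψ]
  calc RCLike.re ⟪c • ψ + v, T (c • ψ + v)⟫_𝕜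
      = RCLike.re ((μ : 𝕜) * ((starRingEnd 𝕜) c * c)) + RCLike.re ⟪v, T v⟫_𝕜 := by
        simp only [map_add, map_smul, hTψ, inner_add_left, inner_add_right, inner_smul_left,
          inner_smul_right, hψψ, hvψ, hTv, mul_zero, mul_one, zero_add]
        ring_nf
    _ = μ * ‖c‖ ^ 2 + RCLike.re ⟪v, T v⟫_𝕜 := by
      rw [RCLike.conj_mul, ← RCLike.ofReal_pow, ← RCLike.ofReal_mul, RCLike.ofReal_re]

theorem ContinuousLinearMap.mem_spectrum_of_apply_eq_smul {E : Type*} [NormedAddCommGroup E]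
    [NormedSpace ℂ E] {D : E →L[ℂ] E} {ψ : E} {μ : ℝ} (hψ : ψ ≠ 0) (hDψ : D ψ = μ • ψ) :
    μ ∈ spectrum ℝ D := by
  rintro ⟨u, hu⟩
  have hψ_ker : (u : E →L[ℂ] E) ψ = 0 := by
    rw [hu, Algebra.algebraMap_eq_smul_one, sub_apply, smul_apply, one_apply_eq_self, hDψ,
      sub_self]
  have hinv_mul := congr($(u.inv_mul) ψ)
  rw [mul_apply_eq_comp, hψ_ker, map_zero, one_apply_eq_self] at hinv_mul
  exact hψ hinv_mul.symm

section

variable {H : Type*} [NormedAddCommGroup H] [InnerProductSpace ℂ H] [CompleteSpace H]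
  {D : H →L[ℂ] H} {ψ : H} {μ : ℝ}

theorem IsSelfAdjoint.cfc_apply_of_apply_eq_smul (hD : IsSelfAdjoint D) (hDψ : D ψ = μ • ψ)
    {f : ℝ → ℝ} (hf : ContinuousOn f (spectrum ℝ D)) : cfc f D ψ = f μ • ψ := by
  rcases eq_or_ne ψ 0 with rfl | hψ
  · simp
  have hμ := D.mem_spectrum_of_apply_eq_smul hψ hDψ
  suffices ∀ g : C(spectrum ℝ D, ℝ), cfcHom hD g ψ = g ⟨μ, hμ⟩ • ψ by
    rw [cfc_apply f D hD hf]
    exact this _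
  intro g
  induction g using ContinuousMap.induction_on_of_compact with
  | const r =>
    show cfcHom hD (algebraMap ℝ _ r) ψ = r • ψ
    rw [AlgHomClass.commutes, Algebra.algebraMap_eq_smul_one]
    rfl
  | id => simpa [cfcHom_id] using hDψ
  | star_id => simpa [cfcHom_id] using hDψ
  | add g₁ g₂ h₁ h₂ => simp [h₁, h₂, add_smul]
  | mul g₁ g₂ h₁ h₂ => simp [h₁, h₂, smul_smul, mul_comm]
  | frequently g hg =>
    have hclosed : IsClosed {g : C(spectrum ℝ D, ℝ) | cfcHom hD g ψ = g ⟨μ, hμ⟩ • ψ} :=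
      isClosed_eq (by fun_prop) (by fun_prop)
    exact hclosed.mem_of_frequently_of_tendsto hg Filter.tendsto_id

theorem IsSelfAdjoint.inner_cfc_apply_eq_zero (hD : IsSelfAdjoint D) (hDψ : D ψ = μ • ψ)
    {f : ℝ → ℝ} (hf : ContinuousOn f (spectrum ℝ D)) {v : H} (hv : ⟪ψ, v⟫_ℂ = 0) :
    ⟪ψ, cfc f D v⟫_ℂ = 0 := by
  calc ⟪ψ, cfc f D v⟫_ℂ = ⟪cfc f D ψ, v⟫_ℂ := ((cfc_predicate f D).isSymmetric ψ v).symm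
    _ = 0 := by
      rw [hD.cfc_apply_of_apply_eq_smul hDψ hf, ← Complex.coe_smul, inner_smul_left, hv, mul_zero]

theorem IsSelfAdjoint.re_inner_cfc_apply_self_eq (hD : IsSelfAdjoint D) (hψ : ‖ψ‖ = 1)
    (hDψ : D ψ = μ • ψ) {f : ℝ → ℝ} (hf : ContinuousOn f (spectrum ℝ D)) (u : H) :
    (⟪u, cfc f D u⟫_ℂ).re =
      f μ * ‖⟪ψ, u⟫_ℂ‖ ^ 2 + (⟪u - ⟪ψ, u⟫_ℂ • ψ, cfc f D (u - ⟪ψ, u⟫_ℂ • ψ)⟫_ℂ).re := by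
  have hu' := inner_sub_inner_smul_self_eq_zero (𝕜 := ℂ) hψ u
  conv_lhs => rw [← sub_add_cancel u (⟪ψ, u⟫_ℂ • ψ), add_comm]
  refine re_inner_smul_add_map_smul_add (T := ((cfc f D : H →L[ℂ] H) : H →ₗ[ℂ] H)) _ hψ ?_ hu'
    (hD.inner_cfc_apply_eq_zero hDψ hf hu')
  rw [← RCLike.real_smul_eq_coe_smul]
  exact hD.cfc_apply_of_apply_eq_smul hDψ hf

theorem IsSelfAdjoint.re_inner_cfc_div_le (hD : IsSelfAdjoint D) (hDψ : D ψ = μ • ψ)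
    (h0 : (0 : ℝ) ∉ spectrum ℝ D)
    (hpos : ∀ v : H, ⟪ψ, v⟫_ℂ = 0 → 0 ≤ (⟪v, cfc (·⁻¹ : ℝ → ℝ) D v⟫_ℂ).re)
    {f : ℝ → ℝ} {β : ℝ} (hf : ContinuousOn f (spectrum ℝ D)) (hfβ : ∀ t ∈ spectrum ℝ D, f t ≤ β)
    {v : H} (hv : ⟪ψ, v⟫_ℂ = 0) :
    (⟪v, cfc (fun t ↦ f t / t) D v⟫_ℂ).re ≤ β * (⟪v, cfc (·⁻¹ : ℝ → ℝ) D v⟫_ℂ).re := by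
  have hinv : ContinuousOn (·⁻¹ : ℝ → ℝ) (spectrum ℝ D) :=
    continuousOn_inv₀.mono fun t ht ↦ ne_of_mem_of_not_mem ht h0
  have hsqrt : ContinuousOn (fun t ↦ √(β - f t)) (spectrum ℝ D) := (continuousOn_const.sub hf).sqrt
  have hdiv : ContinuousOn (fun t ↦ f t / t) (spectrum ℝ D) := hf.mul hinv
  set S := cfc (fun t ↦ √(β - f t)) D
  have hS : β • cfc (·⁻¹ : ℝ → ℝ) D - cfc (fun t ↦ f t / t) D = S * cfc (·⁻¹ : ℝ → ℝ) D * S := by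
    rw [← cfc_mul (fun t ↦ √(β - f t)) _ D hsqrt hinv,
      ← cfc_mul (fun t ↦ √(β - f t) * t⁻¹) _ D (hsqrt.mul hinv) hsqrt, ← cfc_smul β _ D hinv,
      ← cfc_sub (fun t ↦ β • t⁻¹) (fun t ↦ f t / t) D (hinv.const_smul β) hdiv]
    refine cfc_congr fun t ht ↦ ?_
    have hsq := Real.mul_self_sqrt (sub_nonneg.mpr (hfβ t ht))
    simp only [smul_eq_mul]
    linear_combination (-t⁻¹) * hsq
  have hSv : ⟪ψ, S v⟫_ℂ = 0 := hD.inner_cfc_apply_eq_zero hDψ hsqrt hv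
  have hconj : β * (⟪v, cfc (·⁻¹ : ℝ → ℝ) D v⟫_ℂ).re - (⟪v, cfc (fun t ↦ f t / t) D v⟫_ℂ).re =
      (⟪S v, cfc (·⁻¹ : ℝ → ℝ) D (S v)⟫_ℂ).re := by
    have hsymm : ⟪S v, cfc (·⁻¹ : ℝ → ℝ) D (S v)⟫_ℂ = ⟪v, S (cfc (·⁻¹ : ℝ → ℝ) D (S v))⟫_ℂ :=
      (cfc_predicate (fun t ↦ √(β - f t)) D).isSymmetric _ _
    rw [hsymm, ← mul_apply_eq_comp, ← mul_apply_eq_comp, ← hS, sub_apply,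
      inner_sub_right, smul_apply, ← Complex.coe_smul, inner_smul_right]
    simp
  linarith [hpos _ hSv]
end

/-- The upper bound (e:LTUB) from the proof of Lemma 2.6: if `D` is bounded self-adjoint
invertible with simple negative ground state `D ψ = lamD • ψ` (`‖ψ‖ = 1`, `lamD < 0`)
and `Re ⟪D v, v⟫ ≥ ω ‖v‖²` on `{ψ}⊥` (`ω > 0`), and `f : ℝ → ℝ` is continuous with
`0 ≤ f ≤ βhi` (`βhi` plays the role of β₊), then for every `u ∈ H`, writing
`u' := u - ⟪u, ψ⟫ • ψ` (paper convention: inner product linear in its first argument,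
so `⟪u, ψ⟫` is `⟪ψ, u⟫_ℂ` in Mathlib's convention), one has
`Re ⟪(cfc f D)(D⁻¹ u), u⟫ ≤ βhi · Re ⟪D⁻¹ u', u'⟫`. -/
theorem cfc_Dinv_upper_bound_seminorm
    {H : Type*} [NormedAddCommGroup H] [InnerProductSpace ℂ H] [CompleteSpace H]
    (D Dinv : H →L[ℂ] H) (hD : IsSelfAdjoint D)
    (hD1 : D.comp Dinv = ContinuousLinearMap.id ℂ H)
    (hD2 : Dinv.comp D = ContinuousLinearMap.id ℂ H)
    (ψ : H) (hψ : ‖ψ‖ = 1) (lamD : ℝ) (hlamD : lamD < 0) (hDψ : D ψ = lamD • ψ)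
    (ω : ℝ) (hω : 0 < ω)
    (hgap : ∀ v : H, ⟪ψ, v⟫_ℂ = 0 → ω * ‖v‖ ^ 2 ≤ (⟪v, D v⟫_ℂ).re)
    (βhi : ℝ) (f : ℝ → ℝ) (hf : Continuous f)
    (hfb : ∀ t : ℝ, 0 ≤ f t ∧ f t ≤ βhi) :
    ∀ u : H,
      (⟪u, (cfc f D) (Dinv u)⟫_ℂ).re ≤
        βhi * (⟪u - ⟪ψ, u⟫_ℂ • ψ, Dinv (u - ⟪ψ, u⟫_ℂ • ψ)⟫_ℂ).re := by
  intro u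
  let Du : (H →L[ℂ] H)ˣ := ⟨D, Dinv, hD1, hD2⟩
  have h0 : (0 : ℝ) ∉ spectrum ℝ D := spectrum.zero_notMem ℝ Du.isUnit
  have hDinv : cfc (·⁻¹ : ℝ → ℝ) D = Dinv := cfc_inv_id Du
  have hinv : ContinuousOn (·⁻¹ : ℝ → ℝ) (spectrum ℝ D) :=
    continuousOn_inv₀.mono fun t ht ↦ ne_of_mem_of_not_mem ht h0
  have hdiv : ContinuousOn (fun t ↦ f t / t) (spectrum ℝ D) := hf.continuousOn.mul hinv
  have hT : cfc f D * Dinv = cfc (fun t ↦ f t / t) D := by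
    rw [← hDinv, ← cfc_mul f _ D hf.continuousOn hinv]
    rfl
  have hpos : ∀ v : H, ⟪ψ, v⟫_ℂ = 0 → 0 ≤ (⟪v, cfc (·⁻¹ : ℝ → ℝ) D v⟫_ℂ).re := by
    intro v hv
    have hgap' := hgap _ (hD.inner_cfc_apply_eq_zero hDψ hinv hv)
    rw [hDinv, ← mul_apply_eq_comp, show D * Dinv = 1 from hD1, one_apply_eq_self,
      ← inner_conj_symm, Complex.conj_re] at hgap'
    rw [hDinv]
    exact le_trans (by positivity) hgap'
  have hground : f lamD / lamD * ‖⟪ψ, u⟫_ℂ‖ ^ 2 ≤ 0 :=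
    mul_nonpos_of_nonpos_of_nonneg (div_nonpos_of_nonneg_of_nonpos (hfb lamD).1 hlamD.le)
      (by positivity)
  have hsplit := hD.re_inner_cfc_apply_self_eq hψ hDψ hdiv u
  have hexcited := hD.re_inner_cfc_div_le hDψ h0 hpos hf.continuousOn (fun t _ ↦ (hfb t).2)
    (inner_sub_inner_smul_self_eq_zero hψ u)
  rw [hDinv] at hexcited
  rw [← mul_apply_eq_comp, hT]
  linarith
end

section
/- Let H be a complex Hilbert space. Let D : H → H be a bounded self-adjoint invertible operator, ψ ∈ H a unit vector with D ψ = λ_D • ψ for some real λ_D < 0, and ω > 0 such that Re ⟪D v, v⟫ ≥ ω ‖v‖² for every v orthogonal to ψ. Let f : ℝ → ℝ be continuous with 0 ≤ f(t) ≤ β₊ for all t ∈ ℝ. Then for every u ∈ H, Re ⟪(cfc f D)(D⁻¹ u), u⟫ ≤ (β₊/ω) ‖u‖². -/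
/-!
The spectrum of `D` lies in `{lamD} ∪ [ω, ∞)`: for any other real `x`, splitting a vector along
`ψ` and `ψᗮ` (both invariant under `D`) shows that `D - x` is bounded below by
`min |lamD - x| (ω - x)`, and a self-adjoint operator that is bounded below is invertible.
Since `lamD < 0 < ω`, on this set `f t / t ≤ βhi / ω`, hence `cfc (f t / t) D ≤ βhi / ω` as
operators; and `cfc f D (Dinv u) = cfc (f t / t) D (D (Dinv u)) = cfc (f t / t) D u`.
-/

open scoped InnerProductSpace NNReal

namespace ContinuousLinearMap

variable {E : Type*} [NormedAddCommGroup E] [InnerProductSpace ℂ E]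

lemma re_inner_le_of_le_algebraMap {T : E →L[ℂ] E} {r : ℝ}
    (hT : T ≤ algebraMap ℝ (E →L[ℂ] E) r) (u : E) : (⟪u, T u⟫_ℂ).re ≤ r * ‖u‖ ^ 2 := by
  have h := ((le_def _ _).mp hT).re_inner_nonneg_right u
  rw [sub_apply, inner_sub_right, map_sub, algebraMap_apply, ← Complex.coe_smul, inner_smul_right,
    inner_self_eq_norm_sq_to_K, sub_nonneg] at h
  simpa [← Complex.ofReal_pow] using h

end ContinuousLinearMap

lemma IsSelfAdjoint.isUnit_of_antilipschitz {𝕜 E : Type*} [RCLike 𝕜] [NormedAddCommGroup E]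
    [InnerProductSpace 𝕜 E] [CompleteSpace E] {T : E →L[𝕜] E} (hT : IsSelfAdjoint T) {c : ℝ≥0}
    (hc : AntilipschitzWith c T) : IsUnit T := by
  rw [ContinuousLinearMap.isUnit_iff_bijective,
    ContinuousLinearMap.bijective_iff_dense_range_and_antilipschitz]
  refine ⟨?_, c, hc⟩
  rw [Submodule.topologicalClosure_eq_top_iff, ContinuousLinearMap.orthogonal_range,
    hT.adjoint_eq, LinearMap.ker_eq_bot]
  exact hc.injective

section GroundStateGap

variable {H : Type*} [NormedAddCommGroup H] [InnerProductSpace ℂ H]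
  {D : H →L[ℂ] H} {ψ : H} {lamD ω : ℝ}

lemma norm_smul_add_sq_of_inner_eq_zero (hψ : ‖ψ‖ = 1) (a : ℂ) {w : H} (hw : ⟪ψ, w⟫_ℂ = 0) :
    ‖a • ψ + w‖ ^ 2 = ‖a‖ ^ 2 + ‖w‖ ^ 2 := by
  rw [@norm_add_sq ℂ, inner_smul_left, hw, mul_zero, map_zero, mul_zero, add_zero, norm_smul, hψ,
    mul_one]

lemma mul_norm_le_norm_sub_smul_of_inner_eq_zero
    (hgap : ∀ v : H, ⟪ψ, v⟫_ℂ = 0 → ω * ‖v‖ ^ 2 ≤ (⟪v, D v⟫_ℂ).re) (x : ℝ) {w : H}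
    (hw : ⟪ψ, w⟫_ℂ = 0) : (ω - x) * ‖w‖ ≤ ‖D w - (x : ℂ) • w‖ := by
  have hcauchy : (ω - x) * ‖w‖ ^ 2 ≤ ‖w‖ * ‖D w - (x : ℂ) • w‖ := calc
    (ω - x) * ‖w‖ ^ 2 ≤ (⟪w, D w - (x : ℂ) • w⟫_ℂ).re := by
        rw [inner_sub_right, inner_smul_right, inner_self_eq_norm_sq_to_K]
        simp only [Complex.coe_algebraMap, ← Complex.ofReal_pow, Complex.sub_re, Complex.mul_re,
          Complex.ofReal_re, Complex.ofReal_im, mul_zero, sub_zero]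
        linarith [hgap w hw]
    _ ≤ ‖⟪w, D w - (x : ℂ) • w⟫_ℂ‖ := Complex.re_le_norm _
    _ ≤ ‖w‖ * ‖D w - (x : ℂ) • w‖ := norm_inner_le_norm _ _
  rcases (norm_nonneg w).eq_or_lt with h0 | hpos
  · rw [← h0, mul_zero]
    exact norm_nonneg _
  · nlinarith

lemma mul_norm_le_norm_sub_smul [CompleteSpace H] (hD : IsSelfAdjoint D) (hψ : ‖ψ‖ = 1)
    (hDψ : D ψ = lamD • ψ) (hgap : ∀ v : H, ⟪ψ, v⟫_ℂ = 0 → ω * ‖v‖ ^ 2 ≤ (⟪v, D v⟫_ℂ).re)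
    {x c : ℝ} (hc : 0 ≤ c) (hcl : c ≤ |lamD - x|) (hcω : c ≤ ω - x) (v : H) :
    c * ‖v‖ ≤ ‖D v - (x : ℂ) • v‖ := by
  set a := ⟪ψ, v⟫_ℂ
  set w := v - a • ψ
  have hw : ⟪ψ, w⟫_ℂ = 0 := by simp [w, a, inner_self_eq_norm_sq_to_K, hψ]
  have hDw : ⟪ψ, D w - (x : ℂ) • w⟫_ℂ = 0 := by
    have hsymm : ⟪D ψ, w⟫_ℂ = ⟪ψ, D w⟫_ℂ := hD.isSymmetric ψ w
    rw [inner_sub_right, inner_smul_right, ← hsymm, hDψ, ← Complex.coe_smul,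
      inner_smul_left, hw]
    simp
  have hv : v = a • ψ + w := by simp [w]
  have hTv : D v - (x : ℂ) • v = (((lamD - x : ℝ) : ℂ) * a) • ψ + (D w - (x : ℂ) • w) := by
    conv_lhs => rw [hv]
    rw [map_add, map_smul, hDψ, ← Complex.coe_smul]
    push_cast
    module
  have hsq : (c * ‖v‖) ^ 2 ≤ ‖D v - (x : ℂ) • v‖ ^ 2 := calc
    (c * ‖v‖) ^ 2 = c ^ 2 * ‖a‖ ^ 2 + (c * ‖w‖) ^ 2 := by
        rw [hv, mul_pow, norm_smul_add_sq_of_inner_eq_zero hψ _ hw]; ring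
    _ ≤ |lamD - x| ^ 2 * ‖a‖ ^ 2 + ‖D w - (x : ℂ) • w‖ ^ 2 := by
        gcongr
        exact (mul_le_mul_of_nonneg_right hcω (norm_nonneg w)).trans
          (mul_norm_le_norm_sub_smul_of_inner_eq_zero hgap x hw)
    _ = ‖D v - (x : ℂ) • v‖ ^ 2 := by
        rw [hTv, norm_smul_add_sq_of_inner_eq_zero hψ _ hDw, norm_mul, Complex.norm_real,
          Real.norm_eq_abs]
        ring
  exact le_of_pow_le_pow_left₀ two_ne_zero (norm_nonneg _) hsq

lemma spectrum_subset_insert_Ici [CompleteSpace H] (hD : IsSelfAdjoint D) (hψ : ‖ψ‖ = 1)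
    (hDψ : D ψ = lamD • ψ) (hgap : ∀ v : H, ⟪ψ, v⟫_ℂ = 0 → ω * ‖v‖ ^ 2 ≤ (⟪v, D v⟫_ℂ).re) :
    spectrum ℝ D ⊆ insert lamD (Set.Ici ω) := by
  intro x hx
  by_contra hxn
  simp only [Set.mem_insert_iff, Set.mem_Ici, not_or, not_le] at hxn
  set c := min |lamD - x| (ω - x)
  have hc : 0 < c := lt_min (abs_pos.mpr (sub_ne_zero.mpr (Ne.symm hxn.1))) (sub_pos.mpr hxn.2)
  refine spectrum.mem_iff.mp hx (((IsSelfAdjoint.all x).algebraMap _).sub hD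
    |>.isUnit_of_antilipschitz (c := c.toNNReal⁻¹) ?_)
  refine ContinuousLinearMap.antilipschitz_of_bound _ fun v => ?_
  have hbound := mul_norm_le_norm_sub_smul hD hψ hDψ hgap hc.le (min_le_left _ _)
    (min_le_right _ _) v
  rw [sub_apply, ContinuousLinearMap.algebraMap_apply, norm_sub_rev, ← Complex.coe_smul,
    NNReal.coe_inv, Real.coe_toNNReal _ hc.le, le_inv_mul_iff₀ hc]
  exact hbound

end GroundStateGap

theorem cfc_Dinv_upper_bound_norm_general
    {H : Type*} [NormedAddCommGroup H] [InnerProductSpace ℂ H] [CompleteSpace H]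
    (D Dinv : H →L[ℂ] H) (hD : IsSelfAdjoint D)
    (hD1 : D.comp Dinv = ContinuousLinearMap.id ℂ H)
    (ψ : H) (hψ : ‖ψ‖ = 1) (lamD : ℝ) (hlamD : lamD < 0) (hDψ : D ψ = lamD • ψ)
    (ω : ℝ) (hω : 0 < ω)
    (hgap : ∀ v : H, ⟪ψ, v⟫_ℂ = 0 → ω * ‖v‖ ^ 2 ≤ (⟪v, D v⟫_ℂ).re)
    (βhi : ℝ) (f : ℝ → ℝ) (hf : Continuous f)
    (hfb : ∀ t : ℝ, 0 ≤ f t ∧ f t ≤ βhi) :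
    ∀ u : H, (⟪u, (cfc f D) (Dinv u)⟫_ℂ).re ≤ (βhi / ω) * ‖u‖ ^ 2 := by
  intro u
  have hspec := spectrum_subset_insert_Ici hD hψ hDψ hgap
  have hne : ∀ t ∈ spectrum ℝ D, t ≠ 0 := fun t ht => by
    rcases hspec ht with rfl | hωt
    exacts [hlamD.ne, (hω.trans_le hωt).ne']
  have hcont : ContinuousOn (fun t => f t / t) (spectrum ℝ D) :=
    hf.continuousOn.div continuousOn_id hne
  have hfactor : cfc f D = cfc (fun t => f t / t) D * D := by
    rw [cfc_congr fun t ht => (div_mul_cancel₀ (f t) (hne t ht)).symm,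
      cfc_mul (fun t => f t / t) (fun t => t) D hcont continuousOn_id, cfc_id' ℝ D]
  have hβ : 0 ≤ βhi := (hfb 0).1.trans (hfb 0).2
  have hle : cfc (fun t => f t / t) D ≤ algebraMap ℝ (H →L[ℂ] H) (βhi / ω) := by
    refine cfc_le_algebraMap _ _ _ (fun t ht => ?_) hcont hD
    rcases hspec ht with rfl | hωt
    · exact (div_nonpos_of_nonneg_of_nonpos (hfb _).1 hlamD.le).trans (by positivity)
    · exact div_le_div₀ hβ (hfb t).2 hω hωt
  calc (⟪u, cfc f D (Dinv u)⟫_ℂ).re = (⟪u, cfc (fun t => f t / t) D u⟫_ℂ).re := by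
        rw [hfactor, mul_apply_eq_comp, show D (Dinv u) = u from DFunLike.congr_fun hD1 u]
    _ ≤ βhi / ω * ‖u‖ ^ 2 := ContinuousLinearMap.re_inner_le_of_le_algebraMap hle u

/-- The bound `⟨D⁻¹ S_D P₁, P₁⟩ ≤ (β₊/ω) ‖P₁‖²` used in the proof of Theorem 2.7:
if `D` is bounded self-adjoint invertible with simple negative ground state
`D ψ = lamD • ψ` (`‖ψ‖ = 1`, `lamD < 0`) and `Re ⟪D v, v⟫ ≥ ω ‖v‖²` on `{ψ}⊥`
(`ω > 0`), and `f : ℝ → ℝ` is continuous with `0 ≤ f ≤ βhi` (`βhi` plays the role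
of β₊), then for every `u ∈ H`, `Re ⟪(cfc f D)(D⁻¹ u), u⟫ ≤ (βhi/ω) ‖u‖²`. -/
theorem cfc_Dinv_upper_bound_norm
    {H : Type*} [NormedAddCommGroup H] [InnerProductSpace ℂ H] [CompleteSpace H]
    (D Dinv : H →L[ℂ] H) (hD : IsSelfAdjoint D)
    (hD1 : D.comp Dinv = ContinuousLinearMap.id ℂ H)
    (hD2 : Dinv.comp D = ContinuousLinearMap.id ℂ H)
    (ψ : H) (hψ : ‖ψ‖ = 1) (lamD : ℝ) (hlamD : lamD < 0) (hDψ : D ψ = lamD • ψ)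
    (ω : ℝ) (hω : 0 < ω)
    (hgap : ∀ v : H, ⟪ψ, v⟫_ℂ = 0 → ω * ‖v‖ ^ 2 ≤ (⟪v, D v⟫_ℂ).re)
    (βhi : ℝ) (f : ℝ → ℝ) (hf : Continuous f)
    (hfb : ∀ t : ℝ, 0 ≤ f t ∧ f t ≤ βhi) :
    ∀ u : H, (⟪u, (cfc f D) (Dinv u)⟫_ℂ).re ≤ (βhi / ω) * ‖u‖ ^ 2 :=
  cfc_Dinv_upper_bound_norm_general D Dinv hD hD1 ψ hψ lamD hlamD hDψ ω hω hgap βhi f hf hfb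
end

section
/- Let H be a complex Hilbert space. Let D : H → H be a bounded self-adjoint invertible operator, ψ ∈ H a unit vector with D ψ = λ_D • ψ for some real λ_D < 0, and ω > 0 such that Re ⟪D v, v⟫ ≥ ω ‖v‖² for every v orthogonal to ψ. Let 0 < β₋ ≤ β₊, let f : ℝ → ℝ be continuous with β₋ ≤ f(t) ≤ β₊ for all t ∈ ℝ, and let λ > −β₋ be real. Let φ ∈ H satisfy that ⟪φ, ψ⟫ is a positive real number γ, and let u ∈ H satisfy the constraint ⟪u, D⁻¹((cfc f D) + λ I) φ⟫ = 0. Writing u⊥ := u − ⟪u, ψ⟫ • ψ and φ⊥ := φ − γ • ψ, one has |⟪u, ψ⟫| ≤ (|λ_D| (β₊ + λ)) / ((β₋ + λ) γ) · sqrt( Re ⟪D⁻¹ u⊥, u⊥⟫ · Re ⟪D⁻¹ φ⊥, φ⊥⟫ ). -/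
/-!
The spectral gap forces `ψ` to be the only eigenvector of `D` for `λ_D`, so every self-adjoint
operator commuting with `D` — in particular `D⁻¹` and `A = f(D) + λ` — has `ψ` as an eigenvector
and preserves `K = ψ^⊥`; moreover `⟪v, D⁻¹ v⟫ ≥ 0` on `K`. Splitting `φ` and `u` along `ℂψ ⊕ K`,
the constraint becomes `γ r λ_D⁻¹ ⟪ψ, u⟫ = -⟪D⁻¹ A φ⊥, u⊥⟫`, where `A ψ = r ψ` and
`r ≥ β₋ + λ`. Cauchy–Schwarz for the semi-inner product `⟪·, D⁻¹ ·⟫` on `K`, combined with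
`A D⁻¹ A ≤ (β₊ + λ)² D⁻¹` on `K` (the difference is `R D⁻¹ R` for `R = √((β₊ + λ)² - A²)`),
bounds the right-hand side by `(β₊ + λ) √(⟪u⊥, D⁻¹ u⊥⟫ ⟪φ⊥, D⁻¹ φ⊥⟫)`.
-/

open scoped InnerProductSpace
open RCLike

section RCLike

variable {𝕜 H : Type*} [RCLike 𝕜] [NormedAddCommGroup H] [InnerProductSpace 𝕜 H]

theorem LinearMap.IsSymmetric.norm_inner_apply_sq_le {T : H →ₗ[𝕜] H} (hT : T.IsSymmetric)
    {K : Submodule 𝕜 H} (hK : ∀ v ∈ K, 0 ≤ re ⟪v, T v⟫_𝕜) {x y : H} (hx : x ∈ K) (hy : y ∈ K) :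
    ‖⟪x, T y⟫_𝕜‖ ^ 2 ≤ re ⟪x, T x⟫_𝕜 * re ⟪y, T y⟫_𝕜 := by
  let c : PreInnerProductSpace.Core 𝕜 K :=
    { inner := fun a b => ⟪(a : H), T b⟫_𝕜
      conj_inner_symm := fun a b => by simp only [inner_conj_symm, hT a b]
      re_inner_nonneg := fun a => hK a a.2
      add_left := fun a b d => by simp only [Submodule.coe_add, inner_add_left]
      smul_left := fun a b r => by simp only [Submodule.coe_smul, inner_smul_left] }
  have h : ‖⟪x, T y⟫_𝕜‖ * ‖⟪y, T x⟫_𝕜‖ ≤ re ⟪x, T x⟫_𝕜 * re ⟪y, T y⟫_𝕜 :=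
    InnerProductSpace.Core.inner_mul_inner_self_le (c := c) ⟨x, hx⟩ ⟨y, hy⟩
  rwa [← hT y x, ← inner_conj_symm (T y) x, norm_conj, ← sq] at h

theorem inner_apply_eq_mul_inner_add_inner_sub_smul {S : H →L[𝕜] H} {ψ φ u : H} {c γ : ℝ}
    (hSψ : S ψ = (c : 𝕜) • ψ) (hSφ : ⟪ψ, S (φ - (γ : 𝕜) • ψ)⟫_𝕜 = 0) :
    ⟪S φ, u⟫_𝕜 = (γ * c : 𝕜) * ⟪ψ, u⟫_𝕜 + ⟪S (φ - (γ : 𝕜) • ψ), u - ⟪ψ, u⟫_𝕜 • ψ⟫_𝕜 := by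
  set φ' := φ - (γ : 𝕜) • ψ
  have hφ' : φ = (γ : 𝕜) • ψ + φ' := by simp [φ']
  rw [hφ', map_add, map_smul, hSψ]
  simp only [inner_add_left, inner_smul_left, inner_sub_right, inner_smul_right,
    inner_eq_zero_symm.mp hSφ, conj_ofReal]
  ring

theorem sub_inner_smul_mem_orthogonal {ψ : H} (hψ : ‖ψ‖ = 1) (v : H) :
    v - ⟪ψ, v⟫_𝕜 • ψ ∈ (𝕜 ∙ ψ)ᗮ := by
  simpa [Submodule.starProjection_unit_singleton 𝕜 hψ] using
    (𝕜 ∙ ψ).sub_starProjection_mem_orthogonal v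

structure IsGappedGroundState (D : H →L[𝕜] H) (ψ : H) (μ ω : ℝ) : Prop where
  norm_eq_one : ‖ψ‖ = 1
  apply_eq : D ψ = (μ : 𝕜) • ψ
  eigenvalue_neg : μ < 0
  gap_pos : 0 < ω
  gap : ∀ v ∈ (𝕜 ∙ ψ)ᗮ, ω * ‖v‖ ^ 2 ≤ re ⟪v, D v⟫_𝕜

namespace IsGappedGroundState

variable {D T : H →L[𝕜] H} {ψ : H} {μ ω : ℝ}

theorem eq_zero_of_apply_eq_smul (hG : IsGappedGroundState D ψ μ ω) {v : H}
    (hv : v ∈ (𝕜 ∙ ψ)ᗮ) (hDv : D v = (μ : 𝕜) • v) : v = 0 := by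
  have h := hG.gap v hv
  rw [hDv, inner_smul_right, inner_self_eq_norm_sq_to_K, ← ofReal_pow, ← ofReal_mul,
    ofReal_re] at h
  have : ‖v‖ ^ 2 ≤ 0 := by nlinarith [hG.eigenvalue_neg, hG.gap_pos, sq_nonneg ‖v‖]
  exact norm_eq_zero.mp (pow_eq_zero_iff two_ne_zero |>.mp (le_antisymm this (sq_nonneg _)))

theorem apply_eq_inner_smul_of_commute (hG : IsGappedGroundState D ψ μ ω) (hT : Commute T D) :
    T ψ = ⟪ψ, T ψ⟫_𝕜 • ψ := by
  refine sub_eq_zero.mp (hG.eq_zero_of_apply_eq_smul ?_ ?_)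
  · rw [Submodule.mem_orthogonal_singleton_iff_inner_right, inner_sub_right, inner_smul_right,
      inner_self_eq_norm_sq_to_K, hG.norm_eq_one]
    simp
  · rw [map_sub, map_smul, ← mul_apply_eq_comp, ← hT.eq, mul_apply_eq_comp, hG.apply_eq,
      map_smul, smul_sub, smul_comm]

theorem mem_orthogonal_of_commute [CompleteSpace H] (hG : IsGappedGroundState D ψ μ ω)
    (hT : IsSelfAdjoint T) (hTD : Commute T D) {v : H} (hv : v ∈ (𝕜 ∙ ψ)ᗮ) :
    T v ∈ (𝕜 ∙ ψ)ᗮ := by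
  rw [Submodule.mem_orthogonal_singleton_iff_inner_right] at hv ⊢
  calc ⟪ψ, T v⟫_𝕜 = ⟪T ψ, v⟫_𝕜 := (hT.isSymmetric ψ v).symm
    _ = 0 := by rw [hG.apply_eq_inner_smul_of_commute hTD, inner_smul_left, hv, mul_zero]

theorem apply_eq_re_inner_smul_of_commute [CompleteSpace H] (hG : IsGappedGroundState D ψ μ ω)
    (hT : IsSelfAdjoint T) (hTD : Commute T D) : T ψ = (re ⟪T ψ, ψ⟫_𝕜 : 𝕜) • ψ := by
  have hre : (re ⟪T ψ, ψ⟫_𝕜 : 𝕜) = ⟪ψ, T ψ⟫_𝕜 :=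
    (hT.isSymmetric.coe_re_inner_apply_self ψ).trans (hT.isSymmetric ψ ψ)
  rw [hre]
  exact hG.apply_eq_inner_smul_of_commute hTD

theorem invOf_apply (hG : IsGappedGroundState D ψ μ ω) [Invertible D] :
    ⅟D ψ = ((μ⁻¹ : ℝ) : 𝕜) • ψ := by
  have h : ⅟D (D ψ) = ψ := by rw [← mul_apply_eq_comp, invOf_mul_self, one_apply_eq_self]
  rw [hG.apply_eq, map_smul] at h
  rw [ofReal_inv, eq_comm, inv_smul_eq_iff₀ (ofReal_ne_zero.mpr hG.eigenvalue_neg.ne)]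
  exact h.symm

theorem re_inner_invOf_nonneg [CompleteSpace H] (hG : IsGappedGroundState D ψ μ ω)
    (hD : IsSelfAdjoint D) [Invertible D] {v : H} (hv : v ∈ (𝕜 ∙ ψ)ᗮ) :
    0 ≤ re ⟪v, ⅟D v⟫_𝕜 := by
  have hw := hG.mem_orthogonal_of_commute hD.invOf (Commute.invOf_left (Commute.refl D)) hv
  calc 0 ≤ ω * ‖⅟D v‖ ^ 2 := by have := hG.gap_pos; positivity
    _ ≤ re ⟪⅟D v, D (⅟D v)⟫_𝕜 := hG.gap _ hw
    _ = re ⟪v, ⅟D v⟫_𝕜 := by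
      rw [← mul_apply_eq_comp D, mul_invOf_self, one_apply_eq_self]
      exact congrArg re (hD.invOf.isSymmetric v v)

theorem norm_inner_invOf_apply_le [CompleteSpace H] (hG : IsGappedGroundState D ψ μ ω)
    (hD : IsSelfAdjoint D) [Invertible D] {A : H →L[𝕜] H} (hA : IsSelfAdjoint A)
    (hAD : Commute A D) {b : ℝ} (hb : 0 ≤ b)
    (hAb : ∀ x ∈ (𝕜 ∙ ψ)ᗮ, re ⟪A x, ⅟D (A x)⟫_𝕜 ≤ b ^ 2 * re ⟪x, ⅟D x⟫_𝕜)
    {x y : H} (hx : x ∈ (𝕜 ∙ ψ)ᗮ) (hy : y ∈ (𝕜 ∙ ψ)ᗮ) :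
    ‖⟪⅟D (A x), y⟫_𝕜‖ ≤ b * √(re ⟪y, ⅟D y⟫_𝕜 * re ⟪x, ⅟D x⟫_𝕜) := by
  have hpos : ∀ v ∈ (𝕜 ∙ ψ)ᗮ, 0 ≤ re ⟪v, ⅟D v⟫_𝕜 := fun v hv => hG.re_inner_invOf_nonneg hD hv
  have hcs := hD.invOf.isSymmetric.norm_inner_apply_sq_le hpos
    (hG.mem_orthogonal_of_commute hA hAD hx) hy
  rw [← Real.sqrt_sq hb, ← Real.sqrt_mul (sq_nonneg b)]
  refine Real.le_sqrt_of_sq_le ?_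
  calc ‖⟪⅟D (A x), y⟫_𝕜‖ ^ 2 = ‖⟪A x, ⅟D y⟫_𝕜‖ ^ 2 :=
        congrArg (‖·‖ ^ 2) (hD.invOf.isSymmetric (A x) y)
    _ ≤ re ⟪A x, ⅟D (A x)⟫_𝕜 * re ⟪y, ⅟D y⟫_𝕜 := hcs
    _ ≤ b ^ 2 * re ⟪x, ⅟D x⟫_𝕜 * re ⟪y, ⅟D y⟫_𝕜 :=
        mul_le_mul_of_nonneg_right (hAb x hx) (hpos y hy)
    _ = b ^ 2 * (re ⟪y, ⅟D y⟫_𝕜 * re ⟪x, ⅟D x⟫_𝕜) := by ring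

theorem abs_mul_norm_inner_le [CompleteSpace H] (hG : IsGappedGroundState D ψ μ ω)
    (hD : IsSelfAdjoint D) [Invertible D] {A : H →L[𝕜] H} (hA : IsSelfAdjoint A)
    (hAD : Commute A D) {r b γ : ℝ} (hAψ : A ψ = (r : 𝕜) • ψ) (hb : 0 ≤ b)
    (hAb : ∀ x ∈ (𝕜 ∙ ψ)ᗮ, re ⟪A x, ⅟D (A x)⟫_𝕜 ≤ b ^ 2 * re ⟪x, ⅟D x⟫_𝕜)
    {φ u : H} (hφ : ⟪ψ, φ⟫_𝕜 = γ) (hu : ⟪⅟D (A φ), u⟫_𝕜 = 0) :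
    |γ * r| * ‖⟪ψ, u⟫_𝕜‖ ≤ |μ| * (b * √(re ⟪u - ⟪ψ, u⟫_𝕜 • ψ, ⅟D (u - ⟪ψ, u⟫_𝕜 • ψ)⟫_𝕜 *
      re ⟪φ - (γ : 𝕜) • ψ, ⅟D (φ - (γ : 𝕜) • ψ)⟫_𝕜)) := by
  have hφ' : φ - (γ : 𝕜) • ψ ∈ (𝕜 ∙ ψ)ᗮ := hφ ▸ sub_inner_smul_mem_orthogonal hG.norm_eq_one φ
  have hSψ : (⅟D * A) ψ = ((r * μ⁻¹ : ℝ) : 𝕜) • ψ := by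
    rw [mul_apply_eq_comp, hAψ, map_smul, hG.invOf_apply, smul_smul, ← ofReal_mul, mul_comm]
  have hSφ : ⟪ψ, (⅟D * A) (φ - (γ : 𝕜) • ψ)⟫_𝕜 = 0 :=
    Submodule.mem_orthogonal_singleton_iff_inner_right.mp <|
      hG.mem_orthogonal_of_commute hD.invOf (Commute.invOf_left (Commute.refl D))
        (hG.mem_orthogonal_of_commute hA hAD hφ')
  have hsplit := inner_apply_eq_mul_inner_add_inner_sub_smul (u := u) hSψ hSφ
  rw [mul_apply_eq_comp, hu, eq_comm, add_eq_zero_iff_eq_neg] at hsplit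
  have hw := hG.norm_inner_invOf_apply_le hD hA hAD hb hAb hφ'
    (sub_inner_smul_mem_orthogonal hG.norm_eq_one u)
  have hμ : |μ| ≠ 0 := abs_ne_zero.mpr hG.eigenvalue_neg.ne
  calc |γ * r| * ‖⟪ψ, u⟫_𝕜‖ = |μ| * ‖(γ : 𝕜) * ((r * μ⁻¹ : ℝ) : 𝕜) * ⟪ψ, u⟫_𝕜‖ := by
        rw [norm_mul, norm_mul, norm_ofReal, norm_ofReal, abs_mul, abs_mul, abs_inv]
        field_simp
    _ ≤ |μ| * (b * _) := by
        rw [hsplit, norm_neg]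
        exact mul_le_mul_of_nonneg_left hw (abs_nonneg μ)

end IsGappedGroundState

end RCLike

section Complex

variable {H : Type*} [NormedAddCommGroup H] [InnerProductSpace ℂ H]

theorem ContinuousLinearMap.le_re_inner_of_algebraMap_le {A : H →L[ℂ] H} {c : ℝ}
    (h : algebraMap ℝ (H →L[ℂ] H) c ≤ A) (x : H) : c * ‖x‖ ^ 2 ≤ (⟪A x, x⟫_ℂ).re := by
  have := ((ContinuousLinearMap.le_def _ _).mp h).re_inner_nonneg_left x
  rw [sub_apply, inner_sub_left, map_sub, Algebra.algebraMap_eq_smul_one, smul_apply,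
    one_apply_eq_self, ← Complex.coe_smul, inner_smul_left, inner_self_eq_norm_sq_to_K] at this
  simpa [← Complex.ofReal_pow, mul_comm] using this

theorem re_inner_apply_le_of_mul_self_eq [CompleteSpace H] {T A R : H →L[ℂ] H}
    {K : Submodule ℂ H} {c : ℝ} (hA : IsSelfAdjoint A) (hR : IsSelfAdjoint R)
    (hAT : Commute A T) (hRT : Commute R T)
    (hRR : R * R = algebraMap ℝ (H →L[ℂ] H) c - A * A) (hTK : ∀ v ∈ K, 0 ≤ (⟪v, T v⟫_ℂ).re)
    (hRK : ∀ v ∈ K, R v ∈ K) {x : H} (hx : x ∈ K) :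
    (⟪A x, T (A x)⟫_ℂ).re ≤ c * (⟪x, T x⟫_ℂ).re := by
  have hsq : ∀ S : H →L[ℂ] H, IsSelfAdjoint S → Commute S T →
      ⟪S x, T (S x)⟫_ℂ = ⟪x, (T * (S * S)) x⟫_ℂ := fun S hS hST => by
    calc ⟪S x, T (S x)⟫_ℂ = ⟪x, S (T (S x))⟫_ℂ := hS.isSymmetric _ _
      _ = ⟪x, (T * (S * S)) x⟫_ℂ := by rw [← mul_assoc, ← hST.eq]; rfl
  have := hTK _ (hRK x hx)
  rw [hsq R hR hRT, hRR, mul_sub, sub_apply, inner_sub_right, Complex.sub_re, ← hsq A hA hAT,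
    ← Algebra.commutes, mul_apply_eq_comp, Algebra.algebraMap_eq_smul_one, smul_apply,
    one_apply_eq_self, ← Complex.coe_smul, inner_smul_right, Complex.re_ofReal_mul] at this
  linarith

namespace IsGappedGroundState

variable {D : H →L[ℂ] H} {ψ : H} {μ ω : ℝ}

theorem re_inner_cfc_invOf_le [CompleteSpace H] (hG : IsGappedGroundState D ψ μ ω)
    (hD : IsSelfAdjoint D) [Invertible D] {g : ℝ → ℝ} (hg : Continuous g) {b : ℝ}
    (hgb : ∀ t, |g t| ≤ b) {x : H} (hx : x ∈ (ℂ ∙ ψ)ᗮ) :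
    re ⟪cfc g D x, ⅟D (cfc g D x)⟫_ℂ ≤ b ^ 2 * re ⟪x, ⅟D x⟫_ℂ := by
  set s : ℝ → ℝ := fun t => √(b ^ 2 - g t ^ 2)
  have hs : Continuous s := by fun_prop
  have hss : cfc s D * cfc s D = algebraMap ℝ (H →L[ℂ] H) (b ^ 2) - cfc g D * cfc g D := by
    rw [← cfc_mul s s D, ← cfc_mul g g D, ← cfc_const (b ^ 2) D,
      ← cfc_sub (fun _ => b ^ 2) (fun t => g t * g t) D]
    refine cfc_congr fun t _ => ?_
    simp only [s]
    refine (Real.mul_self_sqrt ?_).trans (by ring)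
    nlinarith [sq_abs (g t), abs_nonneg (g t), hgb t]
  have hDDinv : Commute D ⅟D := Commute.invOf_right (Commute.refl D)
  exact re_inner_apply_le_of_mul_self_eq (cfc_predicate g D) (cfc_predicate s D)
    (hDDinv.cfc_real g) (hDDinv.cfc_real s) hss (fun v hv => hG.re_inner_invOf_nonneg hD hv)
    (fun v hv => hG.mem_orthogonal_of_commute (cfc_predicate s D) ((Commute.refl D).cfc_real s) hv)
    hx

end IsGappedGroundState

end Complex

theorem ground_state_projection_bound_general
    {H : Type*} [NormedAddCommGroup H] [InnerProductSpace ℂ H] [CompleteSpace H]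
    (D Dinv : H →L[ℂ] H) (hD : IsSelfAdjoint D)
    (hD1 : D.comp Dinv = ContinuousLinearMap.id ℂ H)
    (hD2 : Dinv.comp D = ContinuousLinearMap.id ℂ H)
    (ψ : H) (hψ : ‖ψ‖ = 1) (lamD : ℝ) (hlamD : lamD < 0) (hDψ : D ψ = lamD • ψ)
    (ω : ℝ) (hω : 0 < ω)
    (hgap : ∀ v : H, ⟪ψ, v⟫_ℂ = 0 → ω * ‖v‖ ^ 2 ≤ (⟪v, D v⟫_ℂ).re)
    (βlo βhi : ℝ)
    (f : ℝ → ℝ) (hf : Continuous f) (hfb : ∀ t : ℝ, βlo ≤ f t ∧ f t ≤ βhi)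
    (lam : ℝ) (hlam : -βlo < lam)
    (φ : H) (γ : ℝ) (hγ : 0 < γ) (hφψ : ⟪ψ, φ⟫_ℂ = (γ : ℂ))
    (u : H)
    (hconstraint : ⟪Dinv ((cfc f D) φ + (lam : ℂ) • φ), u⟫_ℂ = 0) :
    ‖⟪ψ, u⟫_ℂ‖ ≤
      (|lamD| * (βhi + lam)) / ((βlo + lam) * γ) *
        Real.sqrt
          ((⟪u - ⟪ψ, u⟫_ℂ • ψ, Dinv (u - ⟪ψ, u⟫_ℂ • ψ)⟫_ℂ).re *
            (⟪φ - (γ : ℂ) • ψ, Dinv (φ - (γ : ℂ) • ψ)⟫_ℂ).re) := by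
  have hG : IsGappedGroundState D ψ lamD ω :=
    ⟨hψ, by rw [hDψ, RCLike.real_smul_eq_coe_smul (K := ℂ)], hlamD, hω,
      fun v hv => hgap v (Submodule.mem_orthogonal_singleton_iff_inner_right.mp hv)⟩
  let _ : Invertible D := ⟨Dinv, hD2, hD1⟩
  set g : ℝ → ℝ := fun t => f t + lam
  have hA : IsSelfAdjoint (cfc g D) := cfc_predicate g D
  have hAD : Commute (cfc g D) D := (Commute.refl D).cfc_real g
  have hr : βlo + lam ≤ re ⟪cfc g D ψ, ψ⟫_ℂ := by
    simpa [hψ] using ContinuousLinearMap.le_re_inner_of_algebraMap_le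
      (algebraMap_le_cfc g _ D fun t _ => by linarith [(hfb t).1]) ψ
  have hAb := fun x (hx : x ∈ (ℂ ∙ ψ)ᗮ) => hG.re_inner_cfc_invOf_le hD (g := g)
    (hf.add continuous_const) (b := βhi + lam)
    (fun t => abs_le.mpr ⟨by linarith [(hfb t).1, (hfb t).2], by linarith [(hfb t).2]⟩) hx
  have hu : ⟪Dinv (cfc g D φ), u⟫_ℂ = 0 := by
    rwa [cfc_add_const lam f D, add_apply, Algebra.algebraMap_eq_smul_one, smul_apply,
      one_apply_eq_self, ← Complex.coe_smul]
  have key := hG.abs_mul_norm_inner_le hD hA hAD (hG.apply_eq_re_inner_smul_of_commute hA hAD)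
    (by linarith [(hfb 0).1, (hfb 0).2]) hAb hφψ hu
  rw [div_mul_eq_mul_div, le_div_iff₀ (mul_pos (by linarith) hγ)]
  calc ‖⟪ψ, u⟫_ℂ‖ * ((βlo + lam) * γ) ≤ ‖⟪ψ, u⟫_ℂ‖ * (re ⟪cfc g D ψ, ψ⟫_ℂ * γ) := by gcongr
    _ = |γ * re ⟪cfc g D ψ, ψ⟫_ℂ| * ‖⟪ψ, u⟫_ℂ‖ := by
        rw [abs_of_pos (mul_pos hγ (by linarith))]
        ring
    _ ≤ |lamD| * ((βhi + lam) * _) := key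
    -- the two sides agree up to unfolding `⅟D` to `Dinv`
    _ = _ := (mul_assoc _ _ _).symm

/-- The projection bound on the ground-state component from the proof of Lemma 2.6
(DDC-lower): with `D` bounded self-adjoint invertible, negative ground state
`D ψ = lamD • ψ` (`‖ψ‖ = 1`, `lamD < 0`), spectral gap `Re ⟪D v, v⟫ ≥ ω ‖v‖²` on
`{ψ}⊥` (`ω > 0`), a continuous `f : ℝ → ℝ` with `βlo ≤ f ≤ βhi` (`0 < βlo ≤ βhi`;
these play the roles of β₋, β₊), a real `lam > -βlo`, and `φ` with `⟪φ, ψ⟫ = γ > 0`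
(paper convention: inner product linear in its first argument), any `u` satisfying
the constraint `⟪u, D⁻¹((cfc f D) + lam I) φ⟫ = 0` obeys, with
`u⊥ := u - ⟪u, ψ⟫ • ψ` and `φ⊥ := φ - γ • ψ`,
`|⟪u, ψ⟫| ≤ (|lamD| (βhi + lam)) / ((βlo + lam) γ) ·
    √(Re ⟪D⁻¹ u⊥, u⊥⟫ · Re ⟪D⁻¹ φ⊥, φ⊥⟫)`. -/
theorem ground_state_projection_bound
    {H : Type*} [NormedAddCommGroup H] [InnerProductSpace ℂ H] [CompleteSpace H]
    (D Dinv : H →L[ℂ] H) (hD : IsSelfAdjoint D)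
    (hD1 : D.comp Dinv = ContinuousLinearMap.id ℂ H)
    (hD2 : Dinv.comp D = ContinuousLinearMap.id ℂ H)
    (ψ : H) (hψ : ‖ψ‖ = 1) (lamD : ℝ) (hlamD : lamD < 0) (hDψ : D ψ = lamD • ψ)
    (ω : ℝ) (hω : 0 < ω)
    (hgap : ∀ v : H, ⟪ψ, v⟫_ℂ = 0 → ω * ‖v‖ ^ 2 ≤ (⟪v, D v⟫_ℂ).re)
    (βlo βhi : ℝ) (hβlo : 0 < βlo) (hββ : βlo ≤ βhi)
    (f : ℝ → ℝ) (hf : Continuous f) (hfb : ∀ t : ℝ, βlo ≤ f t ∧ f t ≤ βhi)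
    (lam : ℝ) (hlam : -βlo < lam)
    (φ : H) (γ : ℝ) (hγ : 0 < γ) (hφψ : ⟪ψ, φ⟫_ℂ = (γ : ℂ))
    (u : H)
    (hconstraint : ⟪Dinv ((cfc f D) φ + (lam : ℂ) • φ), u⟫_ℂ = 0) :
    ‖⟪ψ, u⟫_ℂ‖ ≤
      (|lamD| * (βhi + lam)) / ((βlo + lam) * γ) *
        Real.sqrt
          ((⟪u - ⟪ψ, u⟫_ℂ • ψ, Dinv (u - ⟪ψ, u⟫_ℂ • ψ)⟫_ℂ).re *
            (⟪φ - (γ : ℂ) • ψ, Dinv (φ - (γ : ℂ) • ψ)⟫_ℂ).re) :=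
  ground_state_projection_bound_general D Dinv hD hD1 hD2 ψ hψ lamD hlamD hDψ ω hω hgap βlo βhi f hf
    hfb lam hlam φ γ hγ hφψ u hconstraint
end

section
/- Let H be a complex Hilbert space and C : H → H a bounded self-adjoint operator. Suppose φ' ∈ H is a unit vector with C φ' = 0, and there exists ω_C > 0 with Re ⟪C v, v⟫ ≥ ω_C ‖v‖² for every v orthogonal to φ'. Let s ∈ H satisfy ⟪φ', s⟫ ≠ 0. Then there exists c₊ > 0 such that Re ⟪C u, u⟫ ≥ c₊ ‖u‖² for every u ∈ H orthogonal to s. -/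
open scoped InnerProductSpace

/-!
Write `u = v + a • φ'` with `a = ⟪φ', u⟫` and `v ⊥ φ'`. Since `C φ' = 0` and `C` is symmetric,
the quadratic form only sees `v`: `⟪u, C u⟫ = ⟪v, C v⟫ ≥ ωC ‖v‖²`. The constraint `⟪s, u⟫ = 0`
reads `a ⟪s, φ'⟫ = -⟪s, v⟫`, so `|a| |⟪s, φ'⟫| ≤ ‖s‖ ‖v‖`, and Pythagoras gives
`|⟪s, φ'⟫|² ‖u‖² ≤ (‖s‖² + |⟪s, φ'⟫|²) ‖v‖²`. Hence `c₊ = ωC |⟪s, φ'⟫|² / (‖s‖² + |⟪s, φ'⟫|²)`.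
-/

section UnitVector

variable {𝕜 E : Type*} [RCLike 𝕜] [NormedAddCommGroup E] [InnerProductSpace 𝕜 E]
  {e : E}

lemma inner_sub_inner_smul_self_of_norm_eq_one (he : ‖e‖ = 1) (u : E) :
    ⟪e, u - ⟪e, u⟫_𝕜 • e⟫_𝕜 = 0 := by
  rw [inner_sub_right, inner_smul_right, inner_self_eq_norm_sq_to_K, he]
  simp

lemma norm_sq_eq_norm_sq_sub_inner_smul_add (he : ‖e‖ = 1) (u : E) :
    ‖u‖ ^ 2 = ‖u - ⟪e, u⟫_𝕜 • e‖ ^ 2 + ‖⟪e, u⟫_𝕜‖ ^ 2 := by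
  have horth : ⟪u - ⟪e, u⟫_𝕜 • e, ⟪e, u⟫_𝕜 • e⟫_𝕜 = 0 := by
    rw [inner_smul_right,
      inner_eq_zero_symm.mp (inner_sub_inner_smul_self_of_norm_eq_one he u), mul_zero]
  simpa only [sub_add_cancel, norm_smul, he, mul_one, ← sq] using
    norm_add_sq_eq_norm_sq_add_norm_sq_of_inner_eq_zero _ _ horth

lemma sq_norm_inner_mul_sq_norm_le_of_inner_eq_zero (he : ‖e‖ = 1) {s u : E}
    (hsu : ⟪s, u⟫_𝕜 = 0) :
    ‖⟪s, e⟫_𝕜‖ ^ 2 * ‖u‖ ^ 2 ≤ (‖s‖ ^ 2 + ‖⟪s, e⟫_𝕜‖ ^ 2) * ‖u - ⟪e, u⟫_𝕜 • e‖ ^ 2 := by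
  set a := ⟪e, u⟫_𝕜
  set v := u - a • e
  have hconstraint : a * ⟪s, e⟫_𝕜 = -⟪s, v⟫_𝕜 := by
    have : ⟪s, u⟫_𝕜 = ⟪s, v⟫_𝕜 + a * ⟪s, e⟫_𝕜 := by
      rw [← inner_smul_right, ← inner_add_right, sub_add_cancel]
    linear_combination hsu - this
  have hbound : ‖a‖ * ‖⟪s, e⟫_𝕜‖ ≤ ‖s‖ * ‖v‖ := by
    calc ‖a‖ * ‖⟪s, e⟫_𝕜‖ = ‖⟪s, v⟫_𝕜‖ := by rw [← norm_mul, hconstraint, norm_neg]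
      _ ≤ ‖s‖ * ‖v‖ := norm_inner_le_norm (𝕜 := 𝕜) s v
  have hbound_sq : (‖a‖ * ‖⟪s, e⟫_𝕜‖) ^ 2 ≤ (‖s‖ * ‖v‖) ^ 2 :=
    pow_le_pow_left₀ (by positivity) hbound 2
  rw [norm_sq_eq_norm_sq_sub_inner_smul_add (𝕜 := 𝕜) he u]
  nlinarith

end UnitVector

lemma LinearMap.IsSymmetric.inner_map_self_sub_of_map_eq_zero {𝕜 E : Type*} [RCLike 𝕜]
    [NormedAddCommGroup E] [InnerProductSpace 𝕜 E] {T : E →ₗ[𝕜] E} (hT : T.IsSymmetric)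
    {w : E} (hw : T w = 0) (u : E) :
    ⟪u, T u⟫_𝕜 = ⟪u - w, T (u - w)⟫_𝕜 := by
  rw [map_sub, hw, sub_zero, inner_sub_left, ← hT w, hw, inner_zero_left, sub_zero]

/-- The classical constrained-coercivity estimate used in Theorem 2.7: if `C` is a
bounded self-adjoint operator with `C φ' = 0` for a unit vector `φ'` and
`Re ⟪C v, v⟫ ≥ ωC ‖v‖²` for all `v ⊥ φ'` (`ωC > 0`), and `s ∈ H` has `⟪φ', s⟫ ≠ 0`
(paper convention: inner product linear in its first argument, i.e. `⟪s, φ'⟫_ℂ ≠ 0`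
in Mathlib's convention), then there exists `c₊ > 0` with
`Re ⟪C u, u⟫ ≥ c₊ ‖u‖²` for every `u ⊥ s`. -/
theorem constrained_coercivity
    {H : Type*} [NormedAddCommGroup H] [InnerProductSpace ℂ H] [CompleteSpace H]
    (C : H →L[ℂ] H) (hC : IsSelfAdjoint C)
    (φ' : H) (hφ' : ‖φ'‖ = 1) (hCφ : C φ' = 0)
    (ωC : ℝ) (hωC : 0 < ωC)
    (hgap : ∀ v : H, ⟪φ', v⟫_ℂ = 0 → ωC * ‖v‖ ^ 2 ≤ (⟪v, C v⟫_ℂ).re)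
    (s : H) (hs : ⟪s, φ'⟫_ℂ ≠ 0) :
    ∃ cplus : ℝ, 0 < cplus ∧
      ∀ u : H, ⟪s, u⟫_ℂ = 0 → cplus * ‖u‖ ^ 2 ≤ (⟪u, C u⟫_ℂ).re := by
  set σ := ‖⟪s, φ'⟫_ℂ‖ ^ 2
  have hden : 0 < ‖s‖ ^ 2 + σ := by positivity
  refine ⟨ωC * σ / (‖s‖ ^ 2 + σ), by positivity, fun u hu => ?_⟩
  set v := u - ⟪φ', u⟫_ℂ • φ'
  have hform : ⟪u, C u⟫_ℂ = ⟪v, C v⟫_ℂ := by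
    have hker : C (⟪φ', u⟫_ℂ • φ') = 0 := by rw [map_smul, hCφ, smul_zero]
    exact hC.isSymmetric.inner_map_self_sub_of_map_eq_zero hker u
  have hnorm := sq_norm_inner_mul_sq_norm_le_of_inner_eq_zero hφ' hu
  have hgap_v := hgap v (inner_sub_inner_smul_self_of_norm_eq_one hφ' u)
  rw [hform, div_mul_eq_mul_div, div_le_iff₀ hden]
  nlinarith
end
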